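/- arXiv:2512.03899 — 6 statements merged into one kernel-verified Lean document; each statement's English description precedes it below -/
import Mathlib

section
/- Let P be a finite poset. For every antitone function μ : P → ℝ with values in [0,1] there exists a finitely supported probability distribution p on the collection of lower sets of P (nonnegative weights on lower sets summing to 1) such that for every x ∈ P, μ(x) = p({D : D is a lower set of P and x ∈ D}). In other words, the marginal map from probability distributions on lower sets of P to antitone [0,1]-valued functions on P is surjective. -/
open scoped Classical

/-!
Peel off the least nonzero value `m` of `μ`: the support `S` of `μ` is a lower set, and
`μ - m • 𝟙_S` is again antitone and nonnegative, bounded by `c - m`, and vanishes at one more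
point. Putting mass `m` on `S` and recursing decomposes `μ`. Allowing total mass `c` rather
than `1` makes the recursion free of renormalisation.
-/

open Finset Function

section Peel

variable {P : Type*} {μ : P → ℝ} {a : ℝ}

lemma nonneg_sub_indicator_support (ha : ∀ x ∈ support μ, a ≤ μ x) :
    0 ≤ μ - (support μ).indicator (fun _ => a) := by
  intro x
  by_cases hx : x ∈ support μ
  · simpa [hx] using ha x hx
  · simp [hx, notMem_support.mp hx]

lemma support_sub_indicator_ssubset {x₀ : P} (hx₀ : x₀ ∈ support μ) :
    support (μ - (support μ).indicator (fun _ => μ x₀)) ⊂ support μ := by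
  refine ⟨fun x hx => ?_, fun h => h hx₀ (by simp [hx₀])⟩
  by_contra hμx
  exact hx (by simp [hμx, notMem_support.mp hμx])

variable [Preorder P]

lemma Antitone.isLowerSet_support (hμ : Antitone μ) (hμ0 : 0 ≤ μ) : IsLowerSet (support μ) :=
  fun _ _ hyx hx => (((hμ0 _).lt_of_ne' hx).trans_le (hμ hyx)).ne'

lemma antitone_sub_indicator_support (hμ : Antitone μ) (hμ0 : 0 ≤ μ)
    (ha : ∀ x ∈ support μ, a ≤ μ x) :
    Antitone (μ - (support μ).indicator (fun _ => a)) := by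
  intro x y hxy
  by_cases hy : y ∈ support μ
  · have hx := hμ.isLowerSet_support hμ0 hxy hy
    simpa [hx, hy] using hμ hxy
  · simpa [hy, notMem_support.mp hy] using nonneg_sub_indicator_support ha x

end Peel

section Marginal

variable {P : Type*} [Fintype P] [Preorder P]

noncomputable def lowerSetMarginal (p : Finset P → ℝ) (x : P) : ℝ :=
  ∑ D ∈ univ.filter (fun D : Finset P => IsLowerSet (↑D : Set P) ∧ x ∈ D), p D

lemma lowerSetMarginal_add (p q : Finset P → ℝ) :
    lowerSetMarginal (p + q) = lowerSetMarginal p + lowerSetMarginal q := by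
  ext x
  exact sum_add_distrib

lemma lowerSetMarginal_single {D : Finset P} (hD : IsLowerSet (D : Set P)) (c : ℝ) :
    lowerSetMarginal (Pi.single D c) = (D : Set P).indicator (fun _ => c) := by
  ext x
  by_cases hx : x ∈ D <;> simp [lowerSetMarginal, Pi.single_apply, hD, hx]

theorem exists_lowerSet_weights_of_antitone {c : ℝ} {μ : P → ℝ} (hc : 0 ≤ c) (hμ0 : 0 ≤ μ)
    (hμc : ∀ x, μ x ≤ c) (hμ : Antitone μ) :
    ∃ p : Finset P → ℝ, 0 ≤ p ∧ (∀ D : Finset P, ¬ IsLowerSet (D : Set P) → p D = 0) ∧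
      ∑ D, p D = c ∧ lowerSetMarginal p = μ := by
  induction hn : (support μ).ncard using Nat.strong_induction_on generalizing c μ with
  | _ n ih =>
  rcases (support μ).eq_empty_or_nonempty with hμ_zero | hμ_ne
  · have h_empty : IsLowerSet ((∅ : Finset P) : Set P) := by simpa using isLowerSet_empty
    refine ⟨Pi.single ∅ c, Pi.single_nonneg.mpr hc, fun D hD => ?_, by simp, ?_⟩
    · simp [Pi.single_eq_of_ne (show D ≠ ∅ by rintro rfl; exact hD h_empty)]
    · rw [lowerSetMarginal_single h_empty, support_eq_empty_iff.mp hμ_zero]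
      ext
      simp
  obtain ⟨x₀, hx₀, hx₀_min⟩ := Set.exists_min_image _ μ (support μ).toFinite hμ_ne
  set S := (support μ).toFinset
  have hS : (S : Set P) = support μ := Set.coe_toFinset _
  have hS_lower : IsLowerSet (S : Set P) := hS ▸ hμ.isLowerSet_support hμ0
  set ν := μ - (support μ).indicator (fun _ => μ x₀)
  have hν_le : ∀ x, ν x ≤ c - μ x₀ := by
    intro x
    by_cases hx : x ∈ support μ
    · simpa [ν, hx] using hμc x
    · simpa [ν, hx, notMem_support.mp hx] using hμc x₀
  obtain ⟨q, hq0, hq_lower, hq_sum, hq_marg⟩ :=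
    ih _ (hn ▸ Set.ncard_lt_ncard (support_sub_indicator_ssubset hx₀)) (sub_nonneg.mpr (hμc x₀))
      (nonneg_sub_indicator_support hx₀_min) hν_le (antitone_sub_indicator_support hμ hμ0 hx₀_min)
      rfl
  refine ⟨Pi.single S (μ x₀) + q, add_nonneg (Pi.single_nonneg.mpr (hμ0 x₀)) hq0,
    fun D hD => ?_, ?_, ?_⟩
  · simp [hq_lower D hD, Pi.single_eq_of_ne (show D ≠ S by rintro rfl; exact hD hS_lower)]
  · simp [sum_add_distrib, hq_sum]
  · rw [lowerSetMarginal_add, lowerSetMarginal_single hS_lower, hq_marg, hS]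
    simp

end Marginal

/-- Every antitone `[0,1]`-valued function on a finite poset is the marginal of a
finitely supported probability distribution on the lower sets of the poset. -/
theorem stmt1 {P : Type*} [Fintype P] [PartialOrder P]
    (μ : P → ℝ) (hμ01 : ∀ x, μ x ∈ Set.Icc (0 : ℝ) 1) (hμ : Antitone μ) :
    ∃ p : Finset P → ℝ,
      (∀ D, 0 ≤ p D) ∧
      (∀ D : Finset P, ¬ IsLowerSet (↑D : Set P) → p D = 0) ∧
      (∑ D : Finset P, p D = 1) ∧
      ∀ x, μ x = ∑ D ∈ Finset.univ.filter
        (fun D : Finset P => IsLowerSet (↑D : Set P) ∧ x ∈ D), p D := by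
  obtain ⟨p, hp0, hp_lower, hp_sum, hp_marg⟩ := exists_lowerSet_weights_of_antitone zero_le_one
    (fun x => (hμ01 x).1) (fun x => (hμ01 x).2) hμ
  exact ⟨p, hp0, hp_lower, hp_sum, fun x => (congrFun hp_marg x).symm⟩
end

section
/- Let P be a finite poset and let a, b ∈ P be incomparable elements (neither a ≤ b nor b ≤ a). Let μ : P → ℝ be an antitone function with values in [0,1] such that μ(a) = μ(b) = 1 and μ(c) = 0 for every c ∈ P with a ≤ c and b ≤ c. Then there is no probability mass function q on P (q ≥ 0, ∑ q = 1) satisfying μ(x) = ∑_{y ∈ P, x ≤ y} q(y) for all x ∈ P. Hence the up-set cumulative map from probability mass functions on P to antitone [0,1]-valued functions is not surjective in general. -/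
open scoped Classical

/-- The up-set cumulative map from probability mass functions to antitone
`[0,1]`-valued functions is not surjective: a weight that is `1` on two
incomparable elements and `0` on all their common upper bounds is not in its
image. -/
theorem stmt5 {P : Type*} [Fintype P] [PartialOrder P]
    (a b : P) (hab : ¬ a ≤ b) (hba : ¬ b ≤ a)
    (μ : P → ℝ) (hanti : Antitone μ) (h01 : ∀ x, μ x ∈ Set.Icc (0 : ℝ) 1)
    (ha : μ a = 1) (hb : μ b = 1)
    (hc : ∀ c : P, a ≤ c → b ≤ c → μ c = 0) :
    ¬ ∃ q : P → ℝ, (∀ y, 0 ≤ q y) ∧ (∑ y : P, q y = 1) ∧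
      ∀ x : P, μ x = ∑ y ∈ Finset.univ.filter (fun y => x ≤ y), q y := by
  rintro ⟨q, hq0, hqsum, hcum⟩
  set A := Finset.univ.filter (fun y => a ≤ y) with hA
  set B := Finset.univ.filter (fun y => b ≤ y) with hB
  have hAsum : ∑ y ∈ A, q y = 1 := by rw [← hcum a, ha]
  have hBsum : ∑ y ∈ B, q y = 1 := by rw [← hcum b, hb]
  have hABsum : ∑ y ∈ A ∩ B, q y = 0 := by
    apply Finset.sum_eq_zero
    intro y hy
    simp only [hA, hB, Finset.mem_inter, Finset.mem_filter] at hy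
    have hμy : μ y = 0 := hc y hy.1.2 hy.2.2
    have h1 : q y ≤ ∑ z ∈ Finset.univ.filter (fun z => y ≤ z), q z := by
      apply Finset.single_le_sum (fun i _ => hq0 i)
      simp
    rw [← hcum y, hμy] at h1
    exact le_antisymm h1 (hq0 y)
  have hUnion : ∑ y ∈ A ∪ B, q y = 2 := by
    have := Finset.sum_union_inter (s₁ := A) (s₂ := B) (f := q)
    rw [hABsum, hAsum, hBsum] at this
    norm_num at this
    exact this
  have hle : ∑ y ∈ A ∪ B, q y ≤ ∑ y : P, q y :=
    Finset.sum_le_sum_of_subset_of_nonneg (Finset.subset_univ _)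
      (fun i _ _ => hq0 i)
  rw [hUnion, hqsum] at hle
  norm_num at hle
end

section
/- Let X be a finite metric space and let 𝒮 be a set of nonempty finite subsets of X that contains every singleton {x}, x ∈ X, and omits at least one nonempty finite subset of X. For a nonempty finite subset σ ⊆ X write diam(σ) = max_{x,y ∈ σ} dist(x,y). Let d_M = max { diam(σ) : σ ∈ 𝒮 } and d_m = min { diam(σ) : σ a nonempty finite subset of X with σ ∉ 𝒮 }. Then { r : ℝ | 0 ≤ r and for every nonempty finite subset σ ⊆ X, σ ∈ 𝒮 ↔ diam(σ) ≤ r } = [d_M, d_m) (the half-open interval, which is empty when d_m ≤ d_M). Consequently, for any probability measure ρ on ℝ, the ρ-measure of the set of scales r at which the Vietoris–Rips complex of X equals 𝒮 is ρ([d_M, d_m)). -/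
open scoped Classical

/-- The set of scales `r` at which the Vietoris–Rips complex of a finite metric
space equals a given collection `𝒮` of simplices is exactly the half-open
interval `[d_M, d_m)`, and consequently its measure under any probability
measure `ρ` on `ℝ` is `ρ [d_M, d_m)`. -/
theorem stmt8 {X : Type*} [MetricSpace X] [Fintype X]
    (𝒮 : Set (Finset X))
    (hne : ∀ σ ∈ 𝒮, σ.Nonempty)
    (hsingleton : ∀ x : X, ({x} : Finset X) ∈ 𝒮)
    (homit : ∃ σ : Finset X, σ.Nonempty ∧ σ ∉ 𝒮)
    (dM dm : ℝ)
    (hdM : dM = sSup {d : ℝ | ∃ σ ∈ 𝒮, d = Metric.diam (↑σ : Set X)})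
    (hdm : dm = sInf {d : ℝ | ∃ σ : Finset X, σ.Nonempty ∧ σ ∉ 𝒮 ∧
        d = Metric.diam (↑σ : Set X)}) :
    {r : ℝ | 0 ≤ r ∧ ∀ σ : Finset X, σ.Nonempty →
        (σ ∈ 𝒮 ↔ Metric.diam (↑σ : Set X) ≤ r)} = Set.Ico dM dm ∧
    ∀ ρ : MeasureTheory.Measure ℝ, MeasureTheory.IsProbabilityMeasure ρ →
      ρ {r : ℝ | 0 ≤ r ∧ ∀ σ : Finset X, σ.Nonempty →
          (σ ∈ 𝒮 ↔ Metric.diam (↑σ : Set X) ≤ r)} = ρ (Set.Ico dM dm) := by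
  set A := {d : ℝ | ∃ σ ∈ 𝒮, d = Metric.diam (↑σ : Set X)} with hA
  set B := {d : ℝ | ∃ σ : Finset X, σ.Nonempty ∧ σ ∉ 𝒮 ∧
      d = Metric.diam (↑σ : Set X)} with hB
  obtain ⟨τ, hτne, hτ⟩ := homit
  obtain ⟨x, hx⟩ := hτne
  have hAfin : A.Finite := by
    apply ((Set.finite_univ (α := Finset X)).image
      (fun σ : Finset X => Metric.diam (↑σ : Set X))).subset
    rintro d ⟨σ, hσ, rfl⟩
    exact ⟨σ, trivial, rfl⟩
  have hBfin : B.Finite := by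
    apply ((Set.finite_univ (α := Finset X)).image
      (fun σ : Finset X => Metric.diam (↑σ : Set X))).subset
    rintro d ⟨σ, _, _, rfl⟩
    exact ⟨σ, trivial, rfl⟩
  have hAne : A.Nonempty := ⟨_, ⟨{x}, hsingleton x, rfl⟩⟩
  have hBne : B.Nonempty := ⟨_, ⟨τ, ⟨x, hx⟩, hτ, rfl⟩⟩
  have key : {r : ℝ | 0 ≤ r ∧ ∀ σ : Finset X, σ.Nonempty →
      (σ ∈ 𝒮 ↔ Metric.diam (↑σ : Set X) ≤ r)} = Set.Ico dM dm := by
    ext r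
    simp only [Set.mem_setOf_eq, Set.mem_Ico]
    constructor
    · rintro ⟨hr0, h⟩
      constructor
      · rw [hdM]
        apply csSup_le hAne
        rintro d ⟨σ, hσ, rfl⟩
        exact (h σ (hne σ hσ)).mp hσ
      · have hmem : sInf B ∈ B := hBne.csInf_mem hBfin
        obtain ⟨σ, hσne, hσ, heq⟩ := hmem
        rw [hdm, heq]
        by_contra hcon
        exact hσ ((h σ hσne).mpr (not_lt.mp hcon))
    · rintro ⟨h1, h2⟩
      have h0 : (0 : ℝ) ≤ dM := by
        rw [hdM]
        apply le_csSup hAfin.bddAbove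
        exact ⟨{x}, hsingleton x, by simp⟩
      refine ⟨h0.trans h1, fun σ hσne => ⟨fun hσ => ?_, fun hd => ?_⟩⟩
      · have : Metric.diam (↑σ : Set X) ≤ dM :=
          hdM ▸ le_csSup hAfin.bddAbove ⟨σ, hσ, rfl⟩
        exact this.trans h1
      · by_contra hσ
        have hge : dm ≤ Metric.diam (↑σ : Set X) :=
          hdm ▸ csInf_le hBfin.bddBelow ⟨σ, hσne, hσ, rfl⟩
        exact absurd (hd.trans_lt h2) hge.not_gt
  exact ⟨key, fun ρ _ => by rw [key]⟩
end

section
/- Let E be a real inner product space and let x, y, z ∈ E. Write a = dist(y,z), b = dist(x,z), c = dist(x,y) and d_max = max(a, max(b,c)). If a² + b² + c² ≤ 2·d_max², then the infimum over w ∈ E of max(dist(x,w), max(dist(y,w), dist(z,w))) equals d_max/2. -/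
lemma median_sq {E : Type*} [NormedAddCommGroup E] [InnerProductSpace ℝ E]
    (p q r : E) :
    4 * dist p (midpoint ℝ q r) ^ 2 + dist q r ^ 2
      = 2 * dist p q ^ 2 + 2 * dist p r ^ 2 := by
  have h1 : p - q + (p - r) = (2 : ℝ) • (p - midpoint ℝ q r) := by
    rw [midpoint_eq_smul_add, invOf_eq_inv]
    module
  have hpar := parallelogram_law_with_norm ℝ (p - q) (p - r)
  rw [h1] at hpar
  have h2 : p - q - (p - r) = r - q := by abel
  rw [h2, norm_smul] at hpar
  simp only [Real.norm_ofNat] at hpar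
  have hqr : ‖r - q‖ = dist q r := by rw [← dist_eq_norm, dist_comm]
  rw [hqr, ← dist_eq_norm, ← dist_eq_norm, ← dist_eq_norm] at hpar
  nlinarith [hpar]

lemma enclose_aux {E : Type*} [NormedAddCommGroup E] [InnerProductSpace ℝ E]
    (p q r : E) (h : dist p q ^ 2 + dist p r ^ 2 ≤ dist q r ^ 2) :
    max (dist p (midpoint ℝ q r))
      (max (dist q (midpoint ℝ q r)) (dist r (midpoint ℝ q r))) ≤ dist q r / 2 := by
  have hq : dist q (midpoint ℝ q r) = dist q r / 2 := by
    rw [dist_left_midpoint]; norm_num; ring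
  have hr : dist r (midpoint ℝ q r) = dist q r / 2 := by
    rw [dist_right_midpoint]; norm_num; ring
  have hm := median_sq p q r
  have hp : dist p (midpoint ℝ q r) ≤ dist q r / 2 := by
    nlinarith [dist_nonneg (x := p) (y := midpoint ℝ q r), dist_nonneg (x := q) (y := r)]
  simp [hq, hr, hp]

/-- For a right or obtuse triangle in a real inner product space, the smallest
enclosing ball radius is half the longest side length. -/
theorem stmt13 {E : Type*} [NormedAddCommGroup E] [InnerProductSpace ℝ E]
    (x y z : E)
    (h : dist y z ^ 2 + dist x z ^ 2 + dist x y ^ 2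
        ≤ 2 * max (dist y z) (max (dist x z) (dist x y)) ^ 2) :
    (⨅ w : E, max (dist x w) (max (dist y w) (dist z w)))
      = max (dist y z) (max (dist x z) (dist x y)) / 2 := by
  set a := dist y z with ha
  set b := dist x z with hb
  set c := dist x y with hc
  set d := max a (max b c) with hd
  have hbdd : BddBelow (Set.range fun w : E =>
      max (dist x w) (max (dist y w) (dist z w))) := by
    refine ⟨0, ?_⟩
    rintro _ ⟨w, rfl⟩
    exact le_trans dist_nonneg (le_max_left _ _)
  apply le_antisymm
  · -- upper bound: exhibit the midpoint of the longest side
    have hcases : d = a ∨ d = b ∨ d = c := by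
      rcases max_cases a (max b c) with ⟨h1, _⟩ | ⟨h1, _⟩
      · exact Or.inl h1
      · rcases max_cases b c with ⟨h2, _⟩ | ⟨h2, _⟩
        · exact Or.inr (Or.inl (h1.trans h2))
        · exact Or.inr (Or.inr (h1.trans h2))
    rcases hcases with hda | hdb | hdc
    · have key : dist x y ^ 2 + dist x z ^ 2 ≤ dist y z ^ 2 := by
        rw [hda] at h; nlinarith
      refine (ciInf_le hbdd (midpoint ℝ y z)).trans ?_
      have := enclose_aux x y z key
      rw [hda]
      calc max (dist x (midpoint ℝ y z)) (max (dist y (midpoint ℝ y z)) (dist z (midpoint ℝ y z)))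
          ≤ dist y z / 2 := this
        _ = a / 2 := by rw [ha]
    · have key : dist y x ^ 2 + dist y z ^ 2 ≤ dist x z ^ 2 := by
        rw [hdb] at h; rw [dist_comm y x]; nlinarith
      refine (ciInf_le hbdd (midpoint ℝ x z)).trans ?_
      have := enclose_aux y x z key
      rw [hdb]
      calc max (dist x (midpoint ℝ x z)) (max (dist y (midpoint ℝ x z)) (dist z (midpoint ℝ x z)))
          ≤ dist x z / 2 := by rw [max_left_comm] at this; exact this
        _ = b / 2 := by rw [hb]
    · have key : dist z x ^ 2 + dist z y ^ 2 ≤ dist x y ^ 2 := by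
        rw [hdc] at h; rw [dist_comm z x, dist_comm z y]; nlinarith
      refine (ciInf_le hbdd (midpoint ℝ x y)).trans ?_
      have := enclose_aux z x y key
      rw [hdc]
      calc max (dist x (midpoint ℝ x y)) (max (dist y (midpoint ℝ x y)) (dist z (midpoint ℝ x y)))
          ≤ dist x y / 2 := by rw [max_comm, max_assoc] at this; exact this
        _ = c / 2 := by rw [hc]
  · -- lower bound
    refine le_ciInf fun w => ?_
    have hA : a ≤ 2 * max (dist x w) (max (dist y w) (dist z w)) := by
      calc a ≤ dist y w + dist z w := dist_triangle_right y z w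
        _ ≤ max (dist y w) (dist z w) + max (dist y w) (dist z w) :=
            add_le_add (le_max_left _ _) (le_max_right _ _)
        _ = 2 * max (dist y w) (dist z w) := (two_mul _).symm
        _ ≤ 2 * max (dist x w) (max (dist y w) (dist z w)) := by
            have : max (dist y w) (dist z w)
                ≤ max (dist x w) (max (dist y w) (dist z w)) := le_max_right _ _
            linarith
    have hB : b ≤ 2 * max (dist x w) (max (dist y w) (dist z w)) := by
      calc b ≤ dist x w + dist z w := dist_triangle_right x z w
        _ ≤ 2 * max (dist x w) (max (dist y w) (dist z w)) := by
            rw [two_mul]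
            gcongr
            · exact le_max_left _ _
            · exact le_max_of_le_right (le_max_right _ _)
    have hC : c ≤ 2 * max (dist x w) (max (dist y w) (dist z w)) := by
      calc c ≤ dist x w + dist y w := dist_triangle_right x y w
        _ ≤ 2 * max (dist x w) (max (dist y w) (dist z w)) := by
            rw [two_mul]
            gcongr
            · exact le_max_left _ _
            · exact le_max_of_le_right (le_max_left _ _)
    have : d ≤ 2 * max (dist x w) (max (dist y w) (dist z w)) := by
      rw [hd]; exact max_le hA (max_le hB hC)
    linarith
end

section
/- Let E be a real inner product space and let x, y, z ∈ E. Write a = dist(y,z), b = dist(x,z), c = dist(x,y), d_max = max(a, max(b,c)) and s = (a+b+c)/2. If a² + b² + c² > 2·d_max², then the infimum over w ∈ E of max(dist(x,w), max(dist(y,w), dist(z,w))) equals the circumradius a·b·c / (4·√(s·(s−a)·(s−b)·(s−c))). -/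
/-!
Write `p, q, r` for the inner products of the two edges at `x, y, z`; the squared sides are
`q + r, r + p, p + q`, and acuteness means `p, q, r > 0`. The circumcentre `o` is then the
barycentre with the positive weights `(q + r) p, (r + p) q, (p + q) r`, so for every `w` some
vertex `v` has `⟪v - o, o - w⟫ ≥ 0`, whence `dist v w ≥ dist v o = R`: the infimum is attained
at `o`. Finally `R² = a² b² c² / (4 (pq + qr + rp))` is Heron's expression, since
`16 s (s - a) (s - b) (s - c) = 4 (pq + qr + rp)`.
-/

open RealInnerProductSpace

section

variable {E : Type*} [NormedAddCommGroup E] [InnerProductSpace ℝ E]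

theorem dist_sq_eq_dist_sq_add_inner_add_dist_sq (p c w : E) :
    dist p w ^ 2 = dist p c ^ 2 + 2 * ⟪p - c, c - w⟫ + dist c w ^ 2 := by
  rw [dist_eq_norm, dist_eq_norm, dist_eq_norm, ← norm_add_sq_real, sub_add_sub_cancel]

theorem dist_le_dist_of_inner_nonneg {p c w : E} (h : 0 ≤ ⟪p - c, c - w⟫) :
    dist p c ≤ dist p w := by
  refine le_of_pow_le_pow_left₀ two_ne_zero dist_nonneg ?_
  linarith [dist_sq_eq_dist_sq_add_inner_add_dist_sq p c w, sq_nonneg (dist c w)]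

theorem inner_nonneg_or_of_smul_add_smul_add_smul_eq_zero {u v w : E} {α β γ : ℝ}
    (hα : 0 < α) (hβ : 0 < β) (hγ : 0 < γ) (h : α • u + β • v + γ • w = 0) (d : E) :
    0 ≤ ⟪u, d⟫ ∨ 0 ≤ ⟪v, d⟫ ∨ 0 ≤ ⟪w, d⟫ := by
  have hsum : α * ⟪u, d⟫ + β * ⟪v, d⟫ + γ * ⟪w, d⟫ = 0 := by
    simpa only [inner_add_left, real_inner_smul_left, inner_zero_left] using
      congrArg (⟪·, d⟫) h
  by_contra! hneg
  obtain ⟨hu, hv, hw⟩ := hneg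
  linarith [mul_neg_of_pos_of_neg hα hu, mul_neg_of_pos_of_neg hβ hv,
    mul_neg_of_pos_of_neg hγ hw]

theorem dist_le_max_dist_of_smul_add_smul_add_smul_eq_zero {x y z c : E} {α β γ : ℝ}
    (hα : 0 < α) (hβ : 0 < β) (hγ : 0 < γ)
    (hc : α • (x - c) + β • (y - c) + γ • (z - c) = 0)
    (hy : dist y c = dist x c) (hz : dist z c = dist x c) (w : E) :
    dist x c ≤ max (dist x w) (max (dist y w) (dist z w)) := by
  rcases inner_nonneg_or_of_smul_add_smul_add_smul_eq_zero hα hβ hγ hc (c - w) with h | h | h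
  · exact (dist_le_dist_of_inner_nonneg h).trans (le_max_left _ _)
  · exact hy ▸ (dist_le_dist_of_inner_nonneg h).trans
      ((le_max_left _ _).trans (le_max_right _ _))
  · exact hz ▸ (dist_le_dist_of_inner_nonneg h).trans
      ((le_max_right _ _).trans (le_max_right _ _))

theorem iInf_max_dist_eq_of_smul_add_smul_add_smul_eq_zero {x y z c : E} {α β γ : ℝ}
    (hα : 0 < α) (hβ : 0 < β) (hγ : 0 < γ)
    (hc : α • (x - c) + β • (y - c) + γ • (z - c) = 0)
    (hy : dist y c = dist x c) (hz : dist z c = dist x c) :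
    ⨅ w, max (dist x w) (max (dist y w) (dist z w)) = dist x c := by
  refine IsGLB.ciInf_eq ⟨?_, fun r hr => ?_⟩
  · rintro _ ⟨w, rfl⟩
    exact dist_le_max_dist_of_smul_add_smul_add_smul_eq_zero hα hβ hγ hc hy hz w
  · simpa [hy, hz] using hr ⟨c, rfl⟩

/-- Positive iff the angle of the triangle at `x` is acute. -/
def edgeInner (x y z : E) : ℝ := ⟪y - x, z - x⟫

theorem dist_sq_eq_edgeInner_add_edgeInner (x y z : E) :
    dist x y ^ 2 = edgeInner x y z + edgeInner y z x := by
  rw [dist_comm, dist_eq_norm, ← real_inner_self_eq_norm_sq, edgeInner, edgeInner,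
    ← neg_sub y z, ← neg_sub y x, inner_neg_neg, real_inner_comm (y - x) (y - z),
    ← inner_add_right, sub_add_sub_cancel']

/-- `a² (b² + c² - a²) / 2` with `a` the side opposite `x`: the classical barycentric
coordinate of the circumcentre. -/
def circumWeight (x y z : E) : ℝ := (edgeInner y z x + edgeInner z x y) * edgeInner x y z

noncomputable def triangleCircumcenter (x y z : E) : E :=
  (circumWeight x y z + circumWeight y z x + circumWeight z x y)⁻¹ •
    (circumWeight x y z • x + circumWeight y z x • y + circumWeight z x y • z)

theorem triangleCircumcenter_rotate (x y z : E) :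
    triangleCircumcenter y z x = triangleCircumcenter x y z := by
  simp only [triangleCircumcenter]
  module

theorem circumWeight_smul_sub_triangleCircumcenter_add_eq_zero {x y z : E}
    (hW : circumWeight x y z + circumWeight y z x + circumWeight z x y ≠ 0) :
    circumWeight x y z • (x - triangleCircumcenter x y z)
      + circumWeight y z x • (y - triangleCircumcenter x y z)
      + circumWeight z x y • (z - triangleCircumcenter x y z) = 0 := by
  simp only [triangleCircumcenter]
  linear_combination (norm := module) -(mul_inv_cancel₀ hW •
    (circumWeight x y z • x + circumWeight y z x • y + circumWeight z x y • z))

theorem norm_smul_add_smul_sq (u v : E) (α β : ℝ) :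
    ‖α • u + β • v‖ ^ 2 = α ^ 2 * ‖u‖ ^ 2 + 2 * α * β * ⟪u, v⟫ + β ^ 2 * ‖v‖ ^ 2 := by
  rw [norm_add_sq_real, real_inner_smul_left, real_inner_smul_right, norm_smul, norm_smul,
    mul_pow, mul_pow, Real.norm_eq_abs, Real.norm_eq_abs, sq_abs, sq_abs]
  ring

theorem dist_triangleCircumcenter_sq {x y z : E}
    (hW : circumWeight x y z + circumWeight y z x + circumWeight z x y ≠ 0) :
    dist x (triangleCircumcenter x y z) ^ 2 = dist x y ^ 2 * dist y z ^ 2 * dist z x ^ 2 /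
      (2 * (circumWeight x y z + circumWeight y z x + circumWeight z x y)) := by
  have hsub : x - triangleCircumcenter x y z =
      (circumWeight x y z + circumWeight y z x + circumWeight z x y)⁻¹ •
        (circumWeight y z x • (x - y) + circumWeight z x y • (x - z)) := by
    simp only [triangleCircumcenter]
    linear_combination (norm := module) -(mul_inv_cancel₀ hW • x)
  have hxy := dist_sq_eq_edgeInner_add_edgeInner x y z
  have hyz := dist_sq_eq_edgeInner_add_edgeInner y z x
  have hzx := dist_sq_eq_edgeInner_add_edgeInner z x y
  have hxz : dist x z ^ 2 = edgeInner z x y + edgeInner x y z := by rw [dist_comm, hzx]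
  have hinner : ⟪x - y, x - z⟫ = edgeInner x y z := by
    rw [edgeInner, ← neg_sub y x, ← neg_sub z x, inner_neg_neg]
  rw [dist_eq_norm, hsub, norm_smul, mul_pow, norm_smul_add_smul_sq, ← dist_eq_norm,
    ← dist_eq_norm, hinner, hxy, hyz, hzx, hxz, Real.norm_eq_abs, sq_abs]
  field_simp
  simp only [circumWeight]
  ring

theorem dist_triangleCircumcenter_snd_eq_fst {x y z : E}
    (hW : circumWeight x y z + circumWeight y z x + circumWeight z x y ≠ 0) :
    dist y (triangleCircumcenter x y z) = dist x (triangleCircumcenter x y z) := by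
  have hW' : circumWeight y z x + circumWeight z x y + circumWeight x y z ≠ 0 := by
    convert hW using 1; ring
  rw [← sq_eq_sq₀ dist_nonneg dist_nonneg]
  calc dist y (triangleCircumcenter x y z) ^ 2
      = dist y (triangleCircumcenter y z x) ^ 2 := by rw [triangleCircumcenter_rotate x y z]
    _ = dist x y ^ 2 * dist y z ^ 2 * dist z x ^ 2 /
          (2 * (circumWeight x y z + circumWeight y z x + circumWeight z x y)) := by
      rw [dist_triangleCircumcenter_sq hW']; ring
    _ = dist x (triangleCircumcenter x y z) ^ 2 := (dist_triangleCircumcenter_sq hW).symm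

theorem edgeInner_pos_of_two_mul_max_sq_lt {x y z : E}
    (h : 2 * max (dist y z) (max (dist x z) (dist x y)) ^ 2
        < dist y z ^ 2 + dist x z ^ 2 + dist x y ^ 2) :
    0 < edgeInner x y z ∧ 0 < edgeInner y z x ∧ 0 < edgeInner z x y := by
  have hacute : ∀ d, 0 ≤ d → d ≤ max (dist y z) (max (dist x z) (dist x y)) →
      2 * d ^ 2 < dist y z ^ 2 + dist x z ^ 2 + dist x y ^ 2 := fun d hd hle => by
    nlinarith [pow_le_pow_left₀ hd hle 2]
  have hyz := dist_sq_eq_edgeInner_add_edgeInner y z x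
  have hzx := dist_sq_eq_edgeInner_add_edgeInner z x y
  have hxy := dist_sq_eq_edgeInner_add_edgeInner x y z
  rw [dist_comm z x] at hzx
  refine ⟨?_, ?_, ?_⟩
  · linarith [hacute _ dist_nonneg (le_max_left _ _)]
  · linarith [hacute _ dist_nonneg ((le_max_left _ _).trans (le_max_right (dist y z) _))]
  · linarith [hacute _ dist_nonneg ((le_max_right _ _).trans (le_max_right (dist y z) _))]

theorem iInf_max_dist_eq_dist_triangleCircumcenter {x y z : E} (hp : 0 < edgeInner x y z)
    (hq : 0 < edgeInner y z x) (hr : 0 < edgeInner z x y) :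
    ⨅ w, max (dist x w) (max (dist y w) (dist z w)) = dist x (triangleCircumcenter x y z) := by
  have hwx : 0 < circumWeight x y z := mul_pos (add_pos hq hr) hp
  have hwy : 0 < circumWeight y z x := mul_pos (add_pos hr hp) hq
  have hwz : 0 < circumWeight z x y := mul_pos (add_pos hp hq) hr
  have hW := (add_pos (add_pos hwx hwy) hwz).ne'
  have hW' : circumWeight z x y + circumWeight x y z + circumWeight y z x ≠ 0 := by
    convert hW using 1; ring
  refine iInf_max_dist_eq_of_smul_add_smul_add_smul_eq_zero hwx hwy hwz
    (circumWeight_smul_sub_triangleCircumcenter_add_eq_zero hW)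
    (dist_triangleCircumcenter_snd_eq_fst hW) ?_
  rw [triangleCircumcenter_rotate z x y]
  exact (dist_triangleCircumcenter_snd_eq_fst hW').symm

end

theorem sixteen_mul_heron {a b c s : ℝ} (hs : s = (a + b + c) / 2) :
    16 * (s * (s - a) * (s - b) * (s - c)) =
      2 * (a ^ 2 * b ^ 2 + b ^ 2 * c ^ 2 + c ^ 2 * a ^ 2)
        - ((a ^ 2) ^ 2 + (b ^ 2) ^ 2 + (c ^ 2) ^ 2) := by
  subst hs; ring

/-- For an acute triangle in a real inner product space, the smallest enclosing
ball radius is the circumradius, given by the Heron-type formula. -/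
theorem stmt14 {E : Type*} [NormedAddCommGroup E] [InnerProductSpace ℝ E]
    (x y z : E)
    (h : 2 * max (dist y z) (max (dist x z) (dist x y)) ^ 2
        < dist y z ^ 2 + dist x z ^ 2 + dist x y ^ 2)
    (s : ℝ) (hs : s = (dist y z + dist x z + dist x y) / 2) :
    (⨅ w : E, max (dist x w) (max (dist y w) (dist z w)))
      = dist y z * dist x z * dist x y /
        (4 * Real.sqrt (s * (s - dist y z) * (s - dist x z) * (s - dist x y))) := by
  obtain ⟨hp, hq, hr⟩ := edgeInner_pos_of_two_mul_max_sq_lt h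
  rw [iInf_max_dist_eq_dist_triangleCircumcenter hp hq hr]
  have hW : 0 < circumWeight x y z + circumWeight y z x + circumWeight z x y := by
    simp only [circumWeight]; positivity
  have hheron : s * (s - dist y z) * (s - dist x z) * (s - dist x y) =
      (circumWeight x y z + circumWeight y z x + circumWeight z x y) / 8 := by
    have h16 := sixteen_mul_heron hs
    have hxz : dist x z ^ 2 = edgeInner z x y + edgeInner x y z := by
      rw [dist_comm, dist_sq_eq_edgeInner_add_edgeInner]
    rw [dist_sq_eq_edgeInner_add_edgeInner, hxz, dist_sq_eq_edgeInner_add_edgeInner] at h16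
    simp only [circumWeight]
    linear_combination h16 / 16
  rw [← sq_eq_sq₀ dist_nonneg (by positivity), dist_triangleCircumcenter_sq hW.ne', div_pow,
    mul_pow 4, Real.sq_sqrt (by rw [hheron]; positivity), hheron, dist_comm z x]
  field_simp
  ring
end

section
/- Let ρ be a probability measure on ℝ, let N ≥ 1, and let d₀ ≤ d₁ ≤ ... ≤ d_N be real numbers. For k ∈ {0,...,N} and a Boolean value s, let B_k(s) denote the event {r ∈ ℝ : (d_k ≤ r) holds iff s = true}. Then for any Booleans s₀, ..., s_N such that ρ(B₀(s₀) ∩ ... ∩ B_{N−1}(s_{N−1})) > 0 and ρ(B_{N−1}(s_{N−1})) > 0, the conditional probability of B_N(s_N) given B₀(s₀) ∩ ... ∩ B_{N−1}(s_{N−1}) equals the conditional probability of B_N(s_N) given B_{N−1}(s_{N−1}) alone. That is, the sequence of threshold indicators k ↦ 𝟙{d_k ≤ r}, r ∼ ρ, is a Markov chain with respect to the order of the thresholds. -/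
open scoped Classical

/-- The threshold indicators `k ↦ 𝟙{d_k ≤ r}` of a single random scale `r ∼ ρ`,
with thresholds sorted increasingly, form a Markov chain: conditioning the
presence of the largest threshold on all previous indicators is the same as
conditioning on the last one alone. -/
theorem stmt16 (ρ : MeasureTheory.Measure ℝ) [MeasureTheory.IsProbabilityMeasure ρ]
    (N : ℕ) (hN : 1 ≤ N) (d : ℕ → ℝ) (hd : ∀ k, k < N → d k ≤ d (k + 1))
    (B : ℕ → Bool → Set ℝ)
    (hB : ∀ k s, B k s = {r : ℝ | (d k ≤ r) ↔ s = true})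
    (s : ℕ → Bool)
    (h1 : 0 < ρ (⋂ k ∈ Finset.range N, B k (s k)))
    (h2 : 0 < ρ (B (N - 1) (s (N - 1)))) :
    ρ (B N (s N) ∩ ⋂ k ∈ Finset.range N, B k (s k)) /
        ρ (⋂ k ∈ Finset.range N, B k (s k))
      = ρ (B N (s N) ∩ B (N - 1) (s (N - 1))) / ρ (B (N - 1) (s (N - 1))) := by
  set A := ⋂ k ∈ Finset.range N, B k (s k) with hA
  -- monotonicity of d up to N
  have hmono : ∀ i j, i ≤ j → j ≤ N → d i ≤ d j := by
    intro i j hij hjN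
    induction j with
    | zero => exact Nat.le_zero.mp hij ▸ le_refl _
    | succ j ih =>
      rcases Nat.eq_or_lt_of_le hij with h | h
      · exact h ▸ le_refl _
      · exact le_trans (ih (Nat.lt_succ_iff.mp h) (by omega)) (hd j (by omega))
  have hAne : A.Nonempty := by
    rw [Set.nonempty_iff_ne_empty]
    intro h
    rw [h] at h1
    simp at h1
  obtain ⟨r₀, hr₀⟩ := hAne
  have hr₀mem : ∀ k, k < N → ((d k ≤ r₀) ↔ s k = true) := by
    intro k hk
    have := Set.mem_iInter₂.mp hr₀ k (Finset.mem_range.mpr hk)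
    rwa [hB, Set.mem_setOf_eq] at this
  have hsub : A ⊆ B (N - 1) (s (N - 1)) := by
    intro r hr
    exact Set.mem_iInter₂.mp hr (N - 1) (Finset.mem_range.mpr (by omega))
  have hdN : d (N - 1) ≤ d N := by
    have := hd (N - 1) (by omega)
    have hh : N - 1 + 1 = N := by omega
    rwa [hh] at this
  rcases hsn : s (N - 1) with _ | _
  · -- s (N-1) = false
    have hBf : B (N - 1) false = {r : ℝ | ¬ d (N - 1) ≤ r} := by
      rw [hB]; ext r; simp
    rcases hsN : s N with _ | _
    · -- s N = false : B N false contains B (N-1) false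
      have hBNf : B N false = {r : ℝ | ¬ d N ≤ r} := by
        rw [hB]; ext r; simp
      have hsub2 : B (N - 1) false ⊆ B N false := by
        rw [hBf, hBNf]
        intro r hr
        simp only [Set.mem_setOf_eq] at *
        intro h; exact hr (le_trans hdN h)
      have e1 : B N false ∩ A = A :=
        Set.inter_eq_right.mpr (fun r hr => hsub2 (hsn ▸ hsub hr))
      have e2 : B N false ∩ B (N - 1) false = B (N - 1) false :=
        Set.inter_eq_right.mpr hsub2
      rw [e1, e2]
      rw [ENNReal.div_self (ne_of_gt h1) (MeasureTheory.measure_ne_top ρ A),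
        ENNReal.div_self (ne_of_gt (hsn ▸ h2)) (MeasureTheory.measure_ne_top ρ _)]
    · -- s N = true : both numerators are empty
      have hBNt : B N true = {r : ℝ | d N ≤ r} := by
        rw [hB]; ext r; simp
      have hdisj : B N true ∩ B (N - 1) false = ∅ := by
        rw [hBNt, hBf]
        ext r
        simp only [Set.mem_inter_iff, Set.mem_setOf_eq, Set.mem_empty_iff_false, iff_false]
        rintro ⟨h3, h4⟩
        exact h4 (le_trans hdN h3)
      have e1 : B N true ∩ A = ∅ := by
        apply Set.eq_empty_of_subset_empty
        rw [← hdisj]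
        exact Set.inter_subset_inter_right _ (fun r hr => hsn ▸ hsub hr)
      have e2 : B N true ∩ B (N - 1) false = ∅ := hdisj
      rw [e1, e2]
      simp
  · -- s (N-1) = true : A = B (N-1) true
    have hst : ∀ k, k < N → s k = true := by
      intro k hk
      have hdN1 : d (N - 1) ≤ r₀ := (hr₀mem (N - 1) (by omega)).mpr hsn
      exact (hr₀mem k hk).mp (le_trans (hmono k (N - 1) (by omega) (by omega)) hdN1)
    have hAeq : A = B (N - 1) (s (N - 1)) := by
      apply Set.Subset.antisymm hsub
      intro r hr
      rw [hsn, hB, Set.mem_setOf_eq] at hr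
      simp only [iff_true] at hr
      apply Set.mem_iInter₂.mpr
      intro k hk
      have hkN := Finset.mem_range.mp hk
      rw [hB, Set.mem_setOf_eq, hst k hkN]
      simp only [iff_true]
      exact le_trans (hmono k (N - 1) (by omega) (by omega)) hr
    rw [hAeq, hsn]
end
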